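/- Let C^{a,b} be a bounded first-quadrant double complex of vector spaces over a field k. Assume: (i) the total complex Tot(C) is exact in every degree; and (ii) for every a ≥ 1 and b ≥ 1, the horizontal cohomology of the row (C^{•,b}, d_h) at position a vanishes. Let Z^b = ker(d_h : C^{0,b} → C^{1,b}), a cochain complex under the restriction of d_v. Then for every b ≥ 2 there is a k-linear isomorphism H^b(Z^•, d_v) ≅ H^{b−1}(C^{•,0}, d_h), where H^{b−1}(C^{•,0}, d_h) is the horizontal cohomology of the bottom row at position b−1. -/

import Mathlib

open DirectSum

set_option maxHeartbeats 1000000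
set_option synthInstance.maxHeartbeats 1000000

noncomputable section

variable (k : Type) [Field k]
variable (C : ℕ → ℕ → Type) [∀ a b, AddCommGroup (C a b)] [∀ a b, Module k (C a b)]
variable (dh : ∀ a b : ℕ, C a b →ₗ[k] C (a + 1) b)
variable (dv : ∀ a b : ℕ, C a b →ₗ[k] C a (b + 1))

/-- The index set `{(a, b) : a + b = m}` of the degree-`m` term of the total complex. -/
def TotIdx (m : ℕ) : Type := {p : ℕ × ℕ // p.1 + p.2 = m}

instance (m : ℕ) : DecidableEq (TotIdx m) :=
  inferInstanceAs (DecidableEq {p : ℕ × ℕ // p.1 + p.2 = m})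

/-- The degree-`m` term `Tot^m = ⊕_{a+b=m} C^{a,b}` of the total complex. -/
def Tot (m : ℕ) : Type := ⨁ (p : TotIdx m), C p.1.1 p.1.2

noncomputable instance (m : ℕ) : AddCommGroup (Tot C m) :=
  inferInstanceAs (AddCommGroup (⨁ (p : TotIdx m), C p.1.1 p.1.2))

noncomputable instance (m : ℕ) : Module k (Tot C m) :=
  inferInstanceAs (Module k (⨁ (p : TotIdx m), C p.1.1 p.1.2))

/-- The total differential `d_h + d_v : Tot^m → Tot^{m+1}`. -/
def totD (m : ℕ) : Tot C m →ₗ[k] Tot C (m + 1) :=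
  DirectSum.toModule k (TotIdx m) (Tot C (m + 1)) fun p =>
    ((DirectSum.lof k (TotIdx (m + 1)) (fun r => C r.1.1 r.1.2)
        ⟨(p.1.1 + 1, p.1.2), by have := p.2; omega⟩).comp (dh p.1.1 p.1.2)) +
    ((DirectSum.lof k (TotIdx (m + 1)) (fun r => C r.1.1 r.1.2)
        ⟨(p.1.1, p.1.2 + 1), by have := p.2; omega⟩).comp (dv p.1.1 p.1.2))

end

/-!
Both cohomology groups are read off the space of chains `Y ∈ Tot^{b+1}` whose total boundary
`D Y` is concentrated in `C^{0,b+2}` (`leftBoundaryChains`). The map `Y ↦ D Y` (`leftEdge`) hits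
every cocycle of `Z^•`, because `Tot` is exact; the map `Y ↦ Y^{b+1,0}` (`bottomEdge`) hits every
`d_h`-cocycle of the bottom row, by a zigzag up the exact rows. Moreover `D Y` is a `d_v`-boundary
in `Z^•` iff `Y^{b+1,0}` is a `d_h`-boundary: if `D Y = d_v w` then `Y - w` is a total cocycle,
hence a total coboundary `D X`, and `Y^{b+1,0} = d_h X^{b,0}`; if `Y^{b+1,0} = d_h t`, then
`Y - D t` can be pushed into column `0` by the exact rows without changing its boundary. Both
cohomology groups are therefore the same quotient of `leftBoundaryChains`.
-/

section Subquotient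

variable {R S P Q : Type*} [Ring R] [AddCommGroup S] [Module R S] [AddCommGroup P] [Module R P]
  [AddCommGroup Q] [Module R Q]

theorem exists_surjective_toSubquotient_ker_eq (φ : S →ₗ[R] P) {K : Submodule R P}
    (B : Submodule R P) (hφ : LinearMap.range φ = K) :
    ∃ f : S →ₗ[R] K ⧸ B.comap K.subtype, Function.Surjective f ∧ LinearMap.ker f = B.comap φ := by
  have hmem : ∀ s, φ s ∈ K := fun s => hφ ▸ LinearMap.mem_range_self φ s
  refine ⟨(B.comap K.subtype).mkQ ∘ₗ φ.codRestrict K hmem,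
    (B.comap K.subtype).mkQ_surjective.comp ?_, ?_⟩
  · rintro ⟨p, hp⟩
    rw [← hφ] at hp
    obtain ⟨s, rfl⟩ := hp
    exact ⟨s, rfl⟩
  · rw [LinearMap.ker_comp, Submodule.ker_mkQ, ← Submodule.comap_comp,
      LinearMap.subtype_comp_codRestrict]

theorem nonempty_linearEquiv_subquotient_of_range_eq (φ : S →ₗ[R] P) (ψ : S →ₗ[R] Q)
    {K B : Submodule R P} {K' B' : Submodule R Q} (hφ : LinearMap.range φ = K)
    (hψ : LinearMap.range ψ = K') (hB : B.comap φ = B'.comap ψ) :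
    Nonempty ((K ⧸ B.comap K.subtype) ≃ₗ[R] (K' ⧸ B'.comap K'.subtype)) := by
  obtain ⟨f, hf, hf_ker⟩ := exists_surjective_toSubquotient_ker_eq φ B hφ
  obtain ⟨g, hg, hg_ker⟩ := exists_surjective_toSubquotient_ker_eq ψ B' hψ
  exact ⟨(f.quotKerEquivOfSurjective hf).symm ≪≫ₗ
    Submodule.quotEquivOfEq _ _ (by rw [hf_ker, hg_ker, hB]) ≪≫ₗ g.quotKerEquivOfSurjective hg⟩

end Subquotient

namespace Tot

variable (k : Type) [Field k]
variable (C : ℕ → ℕ → Type) [∀ a b, AddCommGroup (C a b)] [∀ a b, Module k (C a b)]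

-- With the index proof left to `omega`, apply the map as `(single k C m e f) x`: in
-- `single k C m e f x` the argument `x` would be taken for the proof.
def single (m e f : ℕ) (h : e + f = m := by omega) : C e f →ₗ[k] Tot C m :=
  DirectSum.lof k (TotIdx m) (fun q => C q.1.1 q.1.2) ⟨(e, f), h⟩

def proj (m e f : ℕ) (h : e + f = m := by omega) : Tot C m →ₗ[k] C e f :=
  DirectSum.component k (TotIdx m) (fun q => C q.1.1 q.1.2) ⟨(e, f), h⟩

variable {k C}

@[simp]
theorem proj_single_self {m e f : ℕ} (h : e + f = m) (x : C e f) :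
    proj k C m e f h (single k C m e f h x) = x :=
  DirectSum.component.lof_self (ι := TotIdx m) (M := fun q => C q.1.1 q.1.2) k ⟨(e, f), h⟩ x

theorem proj_single_of_ne {m e f e' f' : ℕ} (h : e + f = m) (h' : e' + f' = m)
    (hne : e ≠ e' ∨ f ≠ f') (x : C e' f') :
    proj k C m e f h (single k C m e' f' h' x) = 0 := by
  refine (DirectSum.component.of (ι := TotIdx m) (M := fun q => C q.1.1 q.1.2) k
    ⟨(e, f), h⟩ ⟨(e', f'), h'⟩ x).trans (dif_neg ?_)
  rintro ⟨⟩
  omega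

theorem ext {m : ℕ} {x y : Tot C m}
    (h : ∀ e f (hef : e + f = m), proj k C m e f hef x = proj k C m e f hef y) :
    x = y :=
  DirectSum.ext_component k fun p => h p.1.1 p.1.2 p.2

theorem linearMap_ext {m : ℕ} {M : Type*} [AddCommGroup M] [Module k M]
    {φ ψ : Tot C m →ₗ[k] M}
    (h : ∀ e f (hef : e + f = m), φ ∘ₗ single k C m e f hef = ψ ∘ₗ single k C m e f hef) :
    φ = ψ :=
  DirectSum.linearMap_ext k fun p => h p.1.1 p.1.2 p.2

end Tot

section DoubleComplex

variable {k : Type} [Field k]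
variable {C : ℕ → ℕ → Type} [∀ a b, AddCommGroup (C a b)] [∀ a b, Module k (C a b)]
variable (dh : ∀ a b : ℕ, C a b →ₗ[k] C (a + 1) b)
variable (dv : ∀ a b : ℕ, C a b →ₗ[k] C a (b + 1))

open Tot

theorem totD_single {m e f : ℕ} (h : e + f = m) (x : C e f) :
    totD k C dh dv m (single k C m e f h x) =
      (single k C (m + 1) (e + 1) f) (dh e f x) + (single k C (m + 1) e (f + 1)) (dv e f x) :=
  DirectSum.toModule_lof (ι := TotIdx m) (M := fun q => C q.1.1 q.1.2) k ⟨(e, f), h⟩ x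

theorem proj_totD_bottom (m : ℕ) (Y : Tot C m) :
    (proj k C (m + 1) (m + 1) 0) (totD k C dh dv m Y) = dh m 0 ((proj k C m m 0) Y) := by
  suffices proj k C (m + 1) (m + 1) 0 ∘ₗ totD k C dh dv m = dh m 0 ∘ₗ proj k C m m 0 from
    LinearMap.congr_fun this Y
  refine linearMap_ext fun e f hef => LinearMap.ext fun x => ?_
  simp only [LinearMap.comp_apply, totD_single, map_add]
  rcases Nat.eq_zero_or_pos f with rfl | hf
  · obtain rfl : e = m := by omega
    simp (disch := omega) [proj_single_of_ne]
  · simp (disch := omega) [proj_single_of_ne]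

theorem proj_totD_succ_succ (m e f : ℕ) (h : e + f + 1 = m) (Y : Tot C m) :
    (proj k C (m + 1) (e + 1) (f + 1)) (totD k C dh dv m Y) =
      dh e (f + 1) ((proj k C m e (f + 1)) Y) + dv (e + 1) f ((proj k C m (e + 1) f) Y) := by
  suffices proj k C (m + 1) (e + 1) (f + 1) ∘ₗ totD k C dh dv m =
      dh e (f + 1) ∘ₗ proj k C m e (f + 1) + dv (e + 1) f ∘ₗ proj k C m (e + 1) f from
    LinearMap.congr_fun this Y
  refine linearMap_ext fun e' f' hef => LinearMap.ext fun x => ?_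
  simp only [LinearMap.comp_apply, LinearMap.add_apply, totD_single, map_add]
  by_cases h1 : e' = e ∧ f' = f + 1
  · obtain ⟨rfl, rfl⟩ := h1
    simp (disch := omega) [proj_single_of_ne]
  by_cases h2 : e' = e + 1 ∧ f' = f
  · obtain ⟨rfl, rfl⟩ := h2
    simp (disch := omega) [proj_single_of_ne]
  simp (disch := omega) [proj_single_of_ne]

theorem totD_totD (hdh : ∀ a b, (dh (a + 1) b).comp (dh a b) = 0)
    (hdv : ∀ a b, (dv a (b + 1)).comp (dv a b) = 0)
    (hanti : ∀ a b, (dh a (b + 1)).comp (dv a b) + (dv (a + 1) b).comp (dh a b) = 0) (m : ℕ)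
    (y : Tot C m) : totD k C dh dv (m + 1) (totD k C dh dv m y) = 0 := by
  suffices totD k C dh dv (m + 1) ∘ₗ totD k C dh dv m = 0 from LinearMap.congr_fun this y
  refine linearMap_ext fun e f hef => LinearMap.ext fun x => ?_
  have hdh_x : dh (e + 1) f (dh e f x) = 0 := LinearMap.congr_fun (hdh e f) x
  have hdv_x : dv e (f + 1) (dv e f x) = 0 := LinearMap.congr_fun (hdv e f) x
  have hanti_x : dh e (f + 1) (dv e f x) + dv (e + 1) f (dh e f x) = 0 :=
    LinearMap.congr_fun (hanti e f) x
  simp only [LinearMap.zero_comp, LinearMap.comp_apply, LinearMap.zero_apply]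
  rw [totD_single, map_add, totD_single, totD_single, hdh_x, hdv_x, map_zero, map_zero, zero_add,
    add_zero, ← map_add, add_comm (dv (e + 1) f (dh e f x)), hanti_x, map_zero]

theorem proj_eq_zero_of_mem_range_single {m e f e' f' : ℕ} (h : e + f = m) (h' : e' + f' = m)
    (hne : e ≠ e' ∨ f ≠ f') {y : Tot C m} (hy : y ∈ LinearMap.range (single k C m e' f' h')) :
    proj k C m e f h y = 0 := by
  obtain ⟨x, rfl⟩ := hy
  exact proj_single_of_ne h h' hne x

theorem exists_proj_eq_of_dv_dh_eq_zero
    (hdv : ∀ a b, (dv a (b + 1)).comp (dv a b) = 0)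
    (hanti : ∀ a b, (dh a (b + 1)).comp (dv a b) + (dv (a + 1) b).comp (dh a b) = 0)
    (hrows : ∀ a b, LinearMap.ker (dh (a + 1) (b + 1)) = LinearMap.range (dh a (b + 1)))
    (a : ℕ) : ∀ {j m : ℕ} (h : a + j = m) (u : C a j), dv (a + 1) j (dh a j u) = 0 →
      ∃ Y : Tot C m, proj k C m a j h Y = u ∧
        (∀ e f (hef : e + f = m), a < e → proj k C m e f hef Y = 0) ∧
        totD k C dh dv m Y - (single k C (m + 1) (a + 1) j) (dh a j u) ∈
          LinearMap.range (single k C (m + 1) 0 (m + 1)) := by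
  induction a with
  | zero =>
    intro j m h u _
    obtain rfl : j = m := by omega
    refine ⟨single k C j 0 j h u, proj_single_self h u,
      fun e f hef he => proj_single_of_ne hef h (by omega) u, ?_⟩
    rw [totD_single, add_sub_cancel_left]
    exact LinearMap.mem_range_self _ _
  | succ a ih =>
    intro j m h u hu
    have hdh_dv_u : dh (a + 1) (j + 1) (dv (a + 1) j u) = 0 := by
      simpa [hu] using LinearMap.congr_fun (hanti (a + 1) j) u
    obtain ⟨v, hv⟩ : -dv (a + 1) j u ∈ LinearMap.range (dh a (j + 1)) := by
      rw [← hrows, LinearMap.mem_ker, map_neg, hdh_dv_u, neg_zero]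
    have hv_closed : dv (a + 1) (j + 1) (dh a (j + 1) v) = 0 := by
      rw [hv, map_neg, ← LinearMap.comp_apply, hdv, LinearMap.zero_apply, neg_zero]
    obtain ⟨Y, hYv, hY_supp, hY_bdry⟩ := ih (by omega : a + (j + 1) = m) v hv_closed
    refine ⟨single k C m (a + 1) j h u + Y, ?_, fun e f hef he => ?_, ?_⟩
    · rw [map_add, proj_single_self, hY_supp _ _ _ (Nat.lt_succ_self a), add_zero]
    · rw [map_add, proj_single_of_ne hef h (by omega), hY_supp e f hef (by omega), add_zero]
    · convert hY_bdry using 1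
      rw [map_add, totD_single, hv, map_neg]
      abel

theorem exists_totD_single_eq_totD
    (hD : ∀ m (y : Tot C m), totD k C dh dv (m + 1) (totD k C dh dv m y) = 0)
    (hrows : ∀ a b, LinearMap.ker (dh (a + 1) (b + 1)) = LinearMap.range (dh a (b + 1)))
    {m a : ℕ} (ha : a ≤ m) (Y : Tot C (m + 1))
    (hY : totD k C dh dv (m + 1) Y ∈ LinearMap.range (single k C (m + 2) 0 (m + 2)))
    (hY_supp : ∀ e f (hef : e + f = m + 1), a < e → proj k C (m + 1) e f hef Y = 0) :
    ∃ w : C 0 (m + 1), totD k C dh dv (m + 1) ((single k C (m + 1) 0 (m + 1)) w) =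
      totD k C dh dv (m + 1) Y := by
  induction a generalizing Y with
  | zero =>
    refine ⟨(proj k C (m + 1) 0 (m + 1)) Y, congrArg _ (ext (k := k) fun e f hef => ?_)⟩
    rcases Nat.eq_zero_or_pos e with rfl | he
    · obtain rfl : f = m + 1 := by omega
      rw [proj_single_self]
    · rw [hY_supp e f hef he, proj_single_of_ne hef _ (by omega)]
  | succ a ih =>
    obtain ⟨c, hc⟩ : ∃ c, a + (c + 1) = m := ⟨m - a - 1, by omega⟩
    have hclosed : dh (a + 1) (c + 1) ((proj k C (m + 1) (a + 1) (c + 1)) Y) = 0 := by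
      have := proj_totD_succ_succ dh dv (m + 1) (a + 1) c (by omega) Y
      rwa [proj_eq_zero_of_mem_range_single _ _ (by omega) hY, hY_supp (a + 1 + 1) c _ (by omega),
        map_zero, add_zero, eq_comm] at this
    obtain ⟨x, hx⟩ : (proj k C (m + 1) (a + 1) (c + 1)) Y ∈ LinearMap.range (dh a (c + 1)) := by
      rwa [← hrows]
    set Y' := Y - totD k C dh dv m (single k C m a (c + 1) hc x)
    have hY' : totD k C dh dv (m + 1) Y' = totD k C dh dv (m + 1) Y := by
      rw [map_sub, hD, sub_zero]
    have hY'_supp : ∀ e f (hef : e + f = m + 1), a < e → proj k C (m + 1) e f hef Y' = 0 := by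
      intro e f hef he
      rw [map_sub, totD_single, map_add]
      by_cases hcorner : e = a + 1 ∧ f = c + 1
      · obtain ⟨rfl, rfl⟩ := hcorner
        simp (disch := omega) only [proj_single_self, proj_single_of_ne, hx, add_zero, sub_self]
      · simp (disch := omega) only [proj_single_of_ne, hY_supp e f hef (by omega), add_zero,
          sub_zero]
    obtain ⟨w, hw⟩ := ih (by omega) Y' (hY' ▸ hY) hY'_supp
    exact ⟨w, hw.trans hY'⟩

theorem totD_single_left_eq_single_iff {m : ℕ} (w : C 0 m) (z : C 0 (m + 1)) :
    totD k C dh dv m ((single k C m 0 m) w) = (single k C (m + 1) 0 (m + 1)) z ↔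
      dh 0 m w = 0 ∧ dv 0 m w = z := by
  rw [totD_single]
  constructor
  · intro h
    constructor
    · simpa (disch := omega) [proj_single_of_ne] using congrArg (proj k C (m + 1) 1 m) h
    · simpa (disch := omega) [proj_single_of_ne] using congrArg (proj k C (m + 1) 0 (m + 1)) h
  · rintro ⟨hw, rfl⟩
    rw [hw, map_zero, zero_add]

noncomputable def leftBoundaryChains (n : ℕ) : Submodule k (Tot C (n + 1)) :=
  (LinearMap.range (single k C (n + 2) 0 (n + 2))).comap (totD k C dh dv (n + 1))

noncomputable def leftEdge (n : ℕ) : leftBoundaryChains dh dv n →ₗ[k] C 0 (n + 2) :=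
  proj k C (n + 2) 0 (n + 2) ∘ₗ totD k C dh dv (n + 1) ∘ₗ (leftBoundaryChains dh dv n).subtype

noncomputable def bottomEdge (n : ℕ) : leftBoundaryChains dh dv n →ₗ[k] C (n + 1) 0 :=
  proj k C (n + 1) (n + 1) 0 ∘ₗ (leftBoundaryChains dh dv n).subtype

theorem totD_eq_single_leftEdge {n : ℕ} (Y : leftBoundaryChains dh dv n) :
    totD k C dh dv (n + 1) Y = (single k C (n + 2) 0 (n + 2)) (leftEdge dh dv n Y) := by
  obtain ⟨z, hz⟩ := Y.2
  rw [leftEdge, LinearMap.comp_apply, LinearMap.comp_apply, Submodule.subtype_apply, ← hz,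
    proj_single_self]

theorem range_leftEdge
    (hD : ∀ m (y : Tot C m), totD k C dh dv (m + 1) (totD k C dh dv m y) = 0) {n : ℕ}
    (htot : LinearMap.ker (totD k C dh dv (n + 2)) = LinearMap.range (totD k C dh dv (n + 1))) :
    LinearMap.range (leftEdge dh dv n) =
      LinearMap.ker (dh 0 (n + 2)) ⊓ LinearMap.ker (dv 0 (n + 2)) := by
  ext z
  simp only [Submodule.mem_inf, LinearMap.mem_ker, LinearMap.mem_range]
  constructor
  · rintro ⟨Y, rfl⟩
    rw [← totD_single_left_eq_single_iff, map_zero, ← totD_eq_single_leftEdge, hD]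
  · intro hz
    obtain ⟨Y, hY⟩ :
        (single k C (n + 2) 0 (n + 2)) z ∈ LinearMap.range (totD k C dh dv (n + 1)) := by
      rw [← htot, LinearMap.mem_ker, (totD_single_left_eq_single_iff dh dv z 0).2 hz, map_zero]
    refine ⟨⟨Y, z, hY.symm⟩, ?_⟩
    rw [leftEdge, LinearMap.comp_apply, LinearMap.comp_apply, Submodule.subtype_apply, hY,
      proj_single_self]

theorem range_bottomEdge
    (hdv : ∀ a b, (dv a (b + 1)).comp (dv a b) = 0)
    (hanti : ∀ a b, (dh a (b + 1)).comp (dv a b) + (dv (a + 1) b).comp (dh a b) = 0)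
    (hrows : ∀ a b, LinearMap.ker (dh (a + 1) (b + 1)) = LinearMap.range (dh a (b + 1)))
    (n : ℕ) : LinearMap.range (bottomEdge dh dv n) = LinearMap.ker (dh (n + 1) 0) := by
  ext c
  rw [LinearMap.mem_ker]
  constructor
  · rintro ⟨Y, rfl⟩
    rw [bottomEdge, LinearMap.comp_apply, Submodule.subtype_apply, ← proj_totD_bottom dh dv,
      totD_eq_single_leftEdge, proj_single_of_ne _ _ (by omega)]
  · intro hc
    obtain ⟨Y, hYc, -, hY⟩ := exists_proj_eq_of_dv_dh_eq_zero dh dv hdv hanti hrows (n + 1)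
      (add_zero (n + 1)) c (by rw [hc, map_zero])
    rw [hc, map_zero, sub_zero] at hY
    exact ⟨⟨Y, hY⟩, hYc⟩

theorem comap_range_dh_bottomEdge
    (hD : ∀ m (y : Tot C m), totD k C dh dv (m + 1) (totD k C dh dv m y) = 0)
    (hrows : ∀ a b, LinearMap.ker (dh (a + 1) (b + 1)) = LinearMap.range (dh a (b + 1))) {n : ℕ}
    (htot : LinearMap.ker (totD k C dh dv (n + 1)) = LinearMap.range (totD k C dh dv n)) :
    (LinearMap.range (dh n 0)).comap (bottomEdge dh dv n) =
      ((LinearMap.ker (dh 0 (n + 1))).map (dv 0 (n + 1))).comap (leftEdge dh dv n) := by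
  ext Y
  simp only [Submodule.mem_comap, Submodule.mem_map, LinearMap.mem_ker, LinearMap.mem_range]
  constructor
  · rintro ⟨t, ht⟩
    set Y' := (Y : Tot C (n + 1)) - totD k C dh dv n ((single k C n n 0) t)
    have hY' : totD k C dh dv (n + 1) Y' = totD k C dh dv (n + 1) Y := by
      rw [map_sub, hD, sub_zero]
    have hY'_supp : ∀ e f (hef : e + f = n + 1), n < e → proj k C (n + 1) e f hef Y' = 0 := by
      intro e f hef he
      obtain ⟨rfl, rfl⟩ : e = n + 1 ∧ f = 0 := by omega
      rw [map_sub, totD_single, map_add, proj_single_self, proj_single_of_ne _ _ (by omega),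
        add_zero, ht, bottomEdge, LinearMap.comp_apply, Submodule.subtype_apply, sub_self]
    obtain ⟨w, hw⟩ := exists_totD_single_eq_totD dh dv hD hrows le_rfl Y' (hY' ▸ Y.2) hY'_supp
    exact ⟨w, (totD_single_left_eq_single_iff dh dv w _).1
      (hw.trans (hY'.trans (totD_eq_single_leftEdge dh dv Y)))⟩
  · rintro ⟨w, hw, hwY⟩
    have hcycle : (Y : Tot C (n + 1)) - (single k C (n + 1) 0 (n + 1)) w ∈
        LinearMap.ker (totD k C dh dv (n + 1)) := by
      rw [LinearMap.mem_ker, map_sub, totD_eq_single_leftEdge,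
        (totD_single_left_eq_single_iff dh dv w _).2 ⟨hw, hwY⟩, sub_self]
    rw [htot] at hcycle
    obtain ⟨X, hX⟩ := hcycle
    refine ⟨(proj k C n n 0) X, ?_⟩
    rw [← proj_totD_bottom dh dv, hX, map_sub, proj_single_of_ne _ _ (by omega), sub_zero]
    rfl

end DoubleComplex

theorem kernel_column_cohomology_iso_bottom_row_general
    (k : Type) [Field k]
    (C : ℕ → ℕ → Type) [∀ a b, AddCommGroup (C a b)] [∀ a b, Module k (C a b)]
    (dh : ∀ a b : ℕ, C a b →ₗ[k] C (a + 1) b)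
    (dv : ∀ a b : ℕ, C a b →ₗ[k] C a (b + 1))
    (hdh : ∀ a b, (dh (a + 1) b).comp (dh a b) = 0)
    (hdv : ∀ a b, (dv a (b + 1)).comp (dv a b) = 0)
    (hanti : ∀ a b, (dh a (b + 1)).comp (dv a b) + (dv (a + 1) b).comp (dh a b) = 0)
    (htot : ∀ m : ℕ,
      LinearMap.ker (totD k C dh dv (m + 1)) = LinearMap.range (totD k C dh dv m))
    (hrows : ∀ a b : ℕ,
      LinearMap.ker (dh (a + 1) (b + 1)) = LinearMap.range (dh a (b + 1)))
    (dZ : ∀ b : ℕ, ↥(LinearMap.ker (dh 0 b)) →ₗ[k] ↥(LinearMap.ker (dh 0 (b + 1))))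
    (hdZ : ∀ (b : ℕ) (x : LinearMap.ker (dh 0 b)), ((dZ b x : C 0 (b + 1))) = dv 0 b (x : C 0 b)) :
    ∀ b : ℕ, Nonempty (
      (↥(LinearMap.ker (dZ (b + 2))) ⧸
        Submodule.comap (LinearMap.ker (dZ (b + 2))).subtype (LinearMap.range (dZ (b + 1))))
      ≃ₗ[k]
      (↥(LinearMap.ker (dh (b + 1) 0)) ⧸
        Submodule.comap (LinearMap.ker (dh (b + 1) 0)).subtype (LinearMap.range (dh b 0)))) := by
  intro b
  have hmaps : ∀ n, ∀ x ∈ LinearMap.ker (dh 0 n), dv 0 n x ∈ LinearMap.ker (dh 0 (n + 1)) :=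
    fun n x hx => hdZ n ⟨x, hx⟩ ▸ (dZ n ⟨x, hx⟩).2
  obtain rfl : dZ = fun n => (dv 0 n).restrict (hmaps n) :=
    funext fun n => LinearMap.ext fun x => Subtype.ext (hdZ n x)
  have hD := totD_totD dh dv hdh hdv hanti
  have hleft := range_leftEdge dh dv hD (htot (b + 1))
  have hleft_closed : ∀ Y, leftEdge dh dv b Y ∈ LinearMap.ker (dh 0 (b + 2)) := fun Y =>
    (le_inf_iff.1 hleft.le).1 (LinearMap.mem_range_self _ Y)
  refine nonempty_linearEquiv_subquotient_of_range_eq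
    ((leftEdge dh dv b).codRestrict _ hleft_closed) (bottomEdge dh dv b) ?_
    (range_bottomEdge dh dv hdv hanti hrows b) ?_
  · rw [LinearMap.ker_restrict, LinearMap.range_codRestrict, hleft, Submodule.comap_inf,
      Submodule.comap_subtype_self, top_inf_eq]
  · rw [LinearMap.range_restrict, comap_range_dh_bottomEdge dh dv hD hrows (htot b),
      ← Submodule.comap_comp, LinearMap.subtype_comp_codRestrict]

/-- **Statement 4.** Let `C` be a bounded first-quadrant double complex of vector spaces (with
anticommuting differentials) whose total complex is exact in every degree, and whose rows are
exact at every position `a ≥ 1` in every row `b ≥ 1`.  Let `Z^b = ker (d_h : C^{0,b} → C^{1,b})`,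
a cochain complex under the restriction `dZ` of the vertical differential.  Then for every
`b ≥ 2` (written `b + 2` below) there is a `k`-linear isomorphism
`H^b(Z^•) ≅ H^{b-1}(C^{•,0})` with the horizontal cohomology of the bottom row at `b - 1`. -/
theorem kernel_column_cohomology_iso_bottom_row
    (k : Type) [Field k]
    (C : ℕ → ℕ → Type) [∀ a b, AddCommGroup (C a b)] [∀ a b, Module k (C a b)]
    (dh : ∀ a b : ℕ, C a b →ₗ[k] C (a + 1) b)
    (dv : ∀ a b : ℕ, C a b →ₗ[k] C a (b + 1))
    (hdh : ∀ a b, (dh (a + 1) b).comp (dh a b) = 0)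
    (hdv : ∀ a b, (dv a (b + 1)).comp (dv a b) = 0)
    (hanti : ∀ a b, (dh a (b + 1)).comp (dv a b) + (dv (a + 1) b).comp (dh a b) = 0)
    (hbdd : ∃ N : ℕ, ∀ a b, (N ≤ a ∨ N ≤ b) → ∀ x : C a b, x = 0)
    (htot0 : LinearMap.ker (totD k C dh dv 0) = ⊥)
    (htot : ∀ m : ℕ,
      LinearMap.ker (totD k C dh dv (m + 1)) = LinearMap.range (totD k C dh dv m))
    (hrows : ∀ a b : ℕ,
      LinearMap.ker (dh (a + 1) (b + 1)) = LinearMap.range (dh a (b + 1)))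
    (dZ : ∀ b : ℕ, ↥(LinearMap.ker (dh 0 b)) →ₗ[k] ↥(LinearMap.ker (dh 0 (b + 1))))
    (hdZ : ∀ (b : ℕ) (x : LinearMap.ker (dh 0 b)), ((dZ b x : C 0 (b + 1))) = dv 0 b (x : C 0 b)) :
    ∀ b : ℕ, Nonempty (
      (↥(LinearMap.ker (dZ (b + 2))) ⧸
        Submodule.comap (LinearMap.ker (dZ (b + 2))).subtype (LinearMap.range (dZ (b + 1))))
      ≃ₗ[k]
      (↥(LinearMap.ker (dh (b + 1) 0)) ⧸
        Submodule.comap (LinearMap.ker (dh (b + 1) 0)).subtype (LinearMap.range (dh b 0)))) :=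
  kernel_column_cohomology_iso_bottom_row_general k C dh dv hdh hdv hanti htot hrows dZ hdZ
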